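/- arXiv:1608.08560 — 2 statements merged into one kernel-verified Lean document; each statement's English description precedes it below -/
import Mathlib

section
/- Let k ≥ 3 be an integer and let K be a subfield of ℂ. Then the binary form p_{2k−1}(x,y) = C(2k−1,k) x^{k−1} y^{k−1} (x − y) satisfies L_K(p_{2k−1}) = k if and only if ζ_{k+1} ∈ K. -/
open MvPolynomial

/-- The `K`-rank (length) of a binary form `f` of degree `d` over a subfield `K` of `ℂ`:
the least number of `d`-th powers of linear forms over `K` of which `f` is a
`K`-linear combination (`⊤` if no such representation exists). -/
noncomputable def Lrank (K : Subfield ℂ) (d : ℕ) (f : MvPolynomial (Fin 2) ℂ) : ℕ∞ :=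
  sInf { n : ℕ∞ | ∃ r : ℕ, n = (r : ℕ∞) ∧ ∃ lam al be : Fin r → ℂ,
    (∀ j, lam j ∈ K ∧ al j ∈ K ∧ be j ∈ K) ∧
    f = ∑ j, MvPolynomial.C (lam j) *
      (MvPolynomial.C (al j) * X 0 + MvPolynomial.C (be j) * X 1) ^ d }

/-- `zeta d = e^(2πi/d)`, the primitive `d`-th root of unity. -/
noncomputable def zeta (d : ℕ) : ℂ :=
  Complex.exp (2 * Real.pi * Complex.I / d)

/-!
Comparing coefficients, `p_{2k-1} = ∑ₜ λₜ (aₜ x + bₜ y)^(2k-1)` says that the moments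
`∑ₜ λₜ aₜ^(2k-1-n) bₜ^n` are `1` for `n = k-1`, `-1` for `n = k` and `0` otherwise. The `k × k`
catalecticant matrix of these moments is unitriangular and factors through `ℂ^r`, so `r ≥ k`.
If `r = k`, both factors are invertible: the Vandermonde structure of one makes the ratios
`bₜ/aₜ` distinct, and since the moments in every window of length `k + 1` cancel, each ratio is a
root of `1 + z + ⋯ + z^k`. So the ratios are exactly the nontrivial `(k+1)`-st roots of unity,
and `ζ_{k+1}` is one of them. Conversely, by orthogonality of the powers of `ζ = ζ_{k+1}`,
`p_{2k-1} = ∑_{j=1}^k (ζ^{2j} - ζ^j)/(k+1) · (x + ζ^j y)^(2k-1)`.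
-/

open Finset

section BinaryForms

variable {R : Type*} [CommSemiring R]

theorem coeff_sum_C_mul_X_pow_mul_X_pow {d m : ℕ} (hm : m ≤ d) (c : ℕ → R) :
    coeff (Finsupp.single 0 (d - m) + Finsupp.single 1 m)
      (∑ n ∈ range (d + 1), C (c n) * X 0 ^ (d - n) * X 1 ^ n : MvPolynomial (Fin 2) R) = c m := by
  have hmono : ∀ n, (C (c n) * X 0 ^ (d - n) * X 1 ^ n : MvPolynomial (Fin 2) R)
      = monomial (Finsupp.single 0 (d - n) + Finsupp.single 1 n) (c n) := by
    intro n
    rw [mul_assoc, X_pow_eq_monomial, X_pow_eq_monomial, monomial_mul, C_mul_monomial, one_mul,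
      mul_one]
  have hexp : ∀ n, (Finsupp.single (0 : Fin 2) (d - n) + Finsupp.single 1 n
      = Finsupp.single 0 (d - m) + Finsupp.single 1 m) ↔ n = m := by
    intro n
    refine ⟨fun h => by simpa using DFunLike.congr_fun h 1, fun h => h ▸ rfl⟩
  simp only [hmono, coeff_sum, coeff_monomial, hexp]
  rw [sum_ite_eq', if_pos (mem_range.2 (by omega))]

theorem sum_C_mul_X_pow_mul_X_pow_inj {d : ℕ} {c c' : ℕ → R} :
    (∑ n ∈ range (d + 1), C (c n) * X 0 ^ (d - n) * X 1 ^ n : MvPolynomial (Fin 2) R)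
      = ∑ n ∈ range (d + 1), C (c' n) * X 0 ^ (d - n) * X 1 ^ n ↔ ∀ n ≤ d, c n = c' n := by
  refine ⟨fun h n hn => ?_, fun h => sum_congr rfl fun n hn => ?_⟩
  · have hcoeff := congrArg (coeff (Finsupp.single 0 (d - n) + Finsupp.single 1 n)) h
    rwa [coeff_sum_C_mul_X_pow_mul_X_pow hn, coeff_sum_C_mul_X_pow_mul_X_pow hn] at hcoeff
  · rw [h n (by simpa [Nat.lt_succ_iff] using hn)]

theorem sum_C_mul_linear_pow {ι : Type*} (s : Finset ι) (d : ℕ) (lam a b : ι → R) :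
    ∑ t ∈ s, C (lam t) * (C (a t) * X 0 + C (b t) * X 1 : MvPolynomial (Fin 2) R) ^ d
      = ∑ n ∈ range (d + 1),
          C (d.choose n * ∑ t ∈ s, lam t * a t ^ (d - n) * b t ^ n) * X 0 ^ (d - n) * X 1 ^ n := by
  simp_rw [fun t => add_comm (C (a t) * X 0 : MvPolynomial (Fin 2) R), add_pow, mul_sum]
  rw [sum_comm]
  refine sum_congr rfl fun n _ => ?_
  simp only [map_sum, sum_mul, map_mul, map_pow, map_natCast]
  refine sum_congr rfl fun t _ => ?_
  ring

end BinaryForms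

def pOddCoeff (k n : ℕ) : ℂ := if n = k - 1 then 1 else if n = k then -1 else 0

noncomputable def pOdd (k : ℕ) : MvPolynomial (Fin 2) ℂ :=
  C (((2 * k - 1).choose k : ℕ) : ℂ) * X 0 ^ (k - 1) * X 1 ^ (k - 1) * (X 0 - X 1)

theorem pOdd_eq_sum {k : ℕ} (hk : 1 ≤ k) :
    pOdd k = ∑ n ∈ range (2 * k - 1 + 1),
      C ((2 * k - 1).choose n * pOddCoeff k n) * X 0 ^ (2 * k - 1 - n) * X 1 ^ n := by
  rw [sum_eq_add (k - 1) k (by omega) ?_ (fun h => absurd (mem_range.2 (by omega)) h)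
    (fun h => absurd (mem_range.2 (by omega)) h)]
  · obtain ⟨m, rfl⟩ : ∃ m, k = m + 1 := ⟨k - 1, by omega⟩
    have h₁ : 2 * (m + 1) - 1 = 2 * m + 1 := by omega
    simp only [pOddCoeff, h₁, add_tsub_cancel_right, if_true, if_neg (Nat.succ_ne_self m),
      show 2 * m + 1 - m = m + 1 by omega, show 2 * m + 1 - (m + 1) = m by omega,
      Nat.choose_symm_half, pOdd]
    simp only [mul_one, mul_neg, map_neg, map_natCast]
    ring
  · intro n _ hn
    simp [pOddCoeff, hn.1, hn.2]

theorem pOdd_eq_sum_iff {k : ℕ} (hk : 1 ≤ k) {ι : Type*} [Fintype ι] (lam a b : ι → ℂ) :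
    pOdd k = ∑ t, C (lam t) * (C (a t) * X 0 + C (b t) * X 1) ^ (2 * k - 1) ↔
      ∀ n ≤ 2 * k - 1, ∑ t, lam t * a t ^ (2 * k - 1 - n) * b t ^ n = pOddCoeff k n := by
  rw [pOdd_eq_sum hk, sum_C_mul_linear_pow, sum_C_mul_X_pow_mul_X_pow_inj]
  refine forall₂_congr fun n hn => ?_
  rw [eq_comm, mul_right_inj' (Nat.cast_ne_zero.2 (Nat.choose_pos hn).ne')]

theorem ENat.sInf_eq_iff_mem {S : Set ℕ∞} {a : ℕ∞} (ha : a ∈ lowerBounds S) (ha_top : a ≠ ⊤) :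
    sInf S = a ↔ a ∈ S := by
  refine ⟨fun h => ?_, fun h => IsLeast.csInf_eq ⟨h, ha⟩⟩
  have hS : S.Nonempty := Set.nonempty_iff_ne_empty.2 fun hS => ha_top (by rw [← h, hS, sInf_empty])
  exact h ▸ csInf_mem hS

theorem Lrank_eq_iff_of_forall_le {K : Subfield ℂ} {d : ℕ} {f : MvPolynomial (Fin 2) ℂ} {k : ℕ}
    (hle : ∀ r (lam a b : Fin r → ℂ), (∀ j, lam j ∈ K ∧ a j ∈ K ∧ b j ∈ K) →
      f = ∑ j, C (lam j) * (C (a j) * X 0 + C (b j) * X 1) ^ d → k ≤ r) :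
    Lrank K d f = k ↔ ∃ lam a b : Fin k → ℂ, (∀ j, lam j ∈ K ∧ a j ∈ K ∧ b j ∈ K) ∧
      f = ∑ j, C (lam j) * (C (a j) * X 0 + C (b j) * X 1) ^ d := by
  unfold Lrank
  rw [ENat.sInf_eq_iff_mem ?_ (ENat.natCast_ne_top k)]
  · refine ⟨fun ⟨r, hr, hrep⟩ => ?_, fun hrep => ⟨k, rfl, hrep⟩⟩
    obtain rfl : k = r := by exact_mod_cast hr
    exact hrep
  · rintro _ ⟨r, rfl, lam, a, b, hK, hf⟩
    exact_mod_cast hle r lam a b hK hf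

section MomentMatrices

open Matrix

variable {ι : Type*} [Fintype ι]

def momentLeft (k : ℕ) (lam a b : ι → ℂ) : Matrix (Fin k) ι ℂ :=
  of fun i t => lam t * a t ^ ((i : ℕ) + 1) * b t ^ (k - 1 - i)

def momentRight (k : ℕ) (a b : ι → ℂ) : Matrix ι (Fin k) ℂ :=
  of fun t j => a t ^ (k - 1 - j) * b t ^ (j : ℕ)

/-- The `k × k` catalecticant matrix of `p_{2k-1}`, with its rows reversed so that it is
unitriangular. -/
def pOddCatalecticant (k : ℕ) : Matrix (Fin k) (Fin k) ℂ :=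
  of fun i j => pOddCoeff k (k - 1 - i + j)

theorem det_pOddCatalecticant (k : ℕ) : (pOddCatalecticant k).det = 1 := by
  rw [det_of_isUpperTriangular]
  · refine prod_eq_one fun i _ => ?_
    simp [pOddCatalecticant, pOddCoeff, show k - 1 - (i : ℕ) + i = k - 1 by omega]
  · intro i j hji
    have : (j : ℕ) < i := hji
    simp only [pOddCatalecticant, pOddCoeff, of_apply]
    rw [if_neg (by omega), if_neg (by omega)]

theorem momentLeft_mul_momentRight {k : ℕ} {lam a b : ι → ℂ}
    (h : ∀ n ≤ 2 * k - 1, ∑ t, lam t * a t ^ (2 * k - 1 - n) * b t ^ n = pOddCoeff k n) :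
    momentLeft k lam a b * momentRight k a b = pOddCatalecticant k := by
  ext i j
  have hi := i.isLt
  have hj := j.isLt
  rw [mul_apply, pOddCatalecticant, of_apply, ← h _ (by omega)]
  refine sum_congr rfl fun t _ => ?_
  simp only [momentLeft, momentRight, of_apply]
  rw [show 2 * k - 1 - (k - 1 - i + j) = ((i : ℕ) + 1) + (k - 1 - j) by omega, pow_add, pow_add]
  ring

theorem le_card_of_moments {k : ℕ} {lam a b : ι → ℂ}
    (h : ∀ n ≤ 2 * k - 1, ∑ t, lam t * a t ^ (2 * k - 1 - n) * b t ^ n = pOddCoeff k n) :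
    k ≤ Fintype.card ι := by
  have hunit : IsUnit (pOddCatalecticant k) := by
    rw [isUnit_iff_isUnit_det, det_pOddCatalecticant]
    exact isUnit_one
  calc k = (pOddCatalecticant k).rank := by rw [rank_of_isUnit _ hunit, Fintype.card_fin]
    _ = (momentLeft k lam a b * momentRight k a b).rank := by rw [momentLeft_mul_momentRight h]
    _ ≤ (momentLeft k lam a b).rank := rank_mul_le_left _ _
    _ ≤ Fintype.card ι := rank_le_card_width _

end MomentMatrices

section ExactRepresentation

open Matrix

variable {k : ℕ} {lam a b : Fin k → ℂ}

theorem ne_zero_of_det_momentLeft_ne_zero (hA : (momentLeft k lam a b).det ≠ 0) (t : Fin k) :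
    lam t ≠ 0 ∧ a t ≠ 0 := by
  have hcol : ∀ i, momentLeft k lam a b i t = lam t * a t * (a t ^ (i : ℕ) * b t ^ (k - 1 - i)) :=
    fun i => by simp only [momentLeft, of_apply, pow_succ]; ring
  refine mul_ne_zero_iff.1 fun h0 => hA (det_eq_zero_of_column_eq_zero t fun i => ?_)
  rw [hcol, h0, zero_mul]

theorem sum_range_pOddCoeff_add {j : ℕ} (hj : j < k) :
    ∑ i ∈ range (k + 1), pOddCoeff k (i + j) = 0 := by
  rw [sum_eq_add (k - 1 - j) (k - j) (by omega) ?_ (fun h => absurd (mem_range.2 (by omega)) h)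
    (fun h => absurd (mem_range.2 (by omega)) h)]
  · simp [pOddCoeff, show k - 1 - j + j = k - 1 by omega, show k - j + j = k by omega,
      show k ≠ k - 1 by omega]
  · intro i _ hi
    simp only [pOddCoeff]
    rw [if_neg (by omega), if_neg (by omega)]

/-- Every window of `k + 1` consecutive moments contains both nonzero ones, which cancel; so the
vector `lam t * ∑ᵢ a t ^ (k - i) * b t ^ i` lies in the left kernel of `momentRight`. -/
theorem sum_pow_mul_pow_eq_zero_of_moments
    (h : ∀ n ≤ 2 * k - 1, ∑ t, lam t * a t ^ (2 * k - 1 - n) * b t ^ n = pOddCoeff k n)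
    (hB : (momentRight k a b).det ≠ 0) (hlam : ∀ t, lam t ≠ 0) (t : Fin k) :
    ∑ i ∈ range (k + 1), a t ^ (k - i) * b t ^ i = 0 := by
  set v : Fin k → ℂ := fun t => lam t * ∑ i ∈ range (k + 1), a t ^ (k - i) * b t ^ i
  have hv : vecMul v (momentRight k a b) = 0 := by
    funext j
    have hj := j.isLt
    calc vecMul v (momentRight k a b) j
        = ∑ i ∈ range (k + 1), ∑ t, lam t * a t ^ (2 * k - 1 - (i + j)) * b t ^ (i + j) := by
          simp only [vecMul, dotProduct, momentRight, of_apply, v, mul_sum, sum_mul]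
          rw [sum_comm]
          refine sum_congr rfl fun i hi => sum_congr rfl fun t _ => ?_
          have hi := mem_range.1 hi
          rw [show 2 * k - 1 - (i + j) = (k - i) + (k - 1 - j) by omega, pow_add, pow_add]
          ring
      _ = 0 := by
          rw [sum_congr rfl fun i hi => h _ (by have := mem_range.1 hi; omega)]
          exact sum_range_pOddCoeff_add hj
  have hv0 : v = 0 := by
    by_contra hne
    exact hB (exists_vecMul_eq_zero_iff.1 ⟨v, hne, hv⟩)
  exact (mul_eq_zero.1 (congrFun hv0 t)).resolve_left (hlam t)

theorem momentRight_eq_diagonal_mul_vandermonde (ha : ∀ t, a t ≠ 0) :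
    momentRight k a b = diagonal (fun t => a t ^ (k - 1)) * vandermonde (fun t => b t / a t) := by
  ext t j
  have hsplit : a t ^ (k - 1) = a t ^ (k - 1 - j) * a t ^ (j : ℕ) := by
    rw [← pow_add, Nat.sub_add_cancel (by omega)]
  rw [diagonal_mul, vandermonde_apply, momentRight, of_apply, div_pow, hsplit]
  field_simp [pow_ne_zero _ (ha t)]

end ExactRepresentation

theorem IsPrimitiveRoot.mem_range_of_injective_of_geom_sum_eq_zero {R : Type*} [CommRing R]
    [IsDomain R] {k : ℕ} (hk : 1 ≤ k) {ζ : R} (hζ : IsPrimitiveRoot ζ (k + 1)) {γ : Fin k → R}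
    (hγ : Function.Injective γ) (hsum : ∀ t, ∑ i ∈ range (k + 1), γ t ^ i = 0) :
    ζ ∈ Set.range γ := by
  classical
  set S := (Polynomial.nthRootsFinset (k + 1) (1 : R)).erase 1
  have hmem : ∀ z : R, z ∈ S ↔ z ≠ 1 ∧ z ^ (k + 1) = 1 := fun z => by
    simp [S, Polynomial.mem_nthRootsFinset (Nat.succ_pos k)]
  have hroot t : γ t ≠ 1 ∧ γ t ^ (k + 1) = 1 := by
    refine ⟨fun h1 => ?_, ?_⟩
    · have hsum1 := hsum t
      simp only [h1, one_pow, sum_const, card_range, nsmul_eq_mul, mul_one] at hsum1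
      exact (hζ.neZero').out (by exact_mod_cast hsum1)
    · have := geom_sum_mul (γ t) (k + 1)
      rwa [hsum t, zero_mul, eq_comm, sub_eq_zero] at this
  have hsub : univ.image γ ⊆ S := by
    intro z hz
    obtain ⟨t, -, rfl⟩ := mem_image.1 hz
    exact (hmem _).2 (hroot t)
  have hcard : #S ≤ #(univ.image γ) := by
    rw [card_image_of_injective _ hγ, card_univ, Fintype.card_fin,
      card_erase_of_mem ((Polynomial.mem_nthRootsFinset (Nat.succ_pos k) 1).2 (one_pow _)),
      hζ.card_nthRootsFinset, Nat.add_sub_cancel]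
  have hζS : ζ ∈ univ.image γ :=
    eq_of_subset_of_card_le hsub hcard ▸ (hmem ζ).2 ⟨hζ.ne_one (by omega), hζ.pow_eq_one⟩
  simpa using hζS

theorem exists_div_eq_of_moments {k : ℕ} (hk : 1 ≤ k) {ω : ℂ} (hω : IsPrimitiveRoot ω (k + 1))
    {lam a b : Fin k → ℂ}
    (h : ∀ n ≤ 2 * k - 1, ∑ t, lam t * a t ^ (2 * k - 1 - n) * b t ^ n = pOddCoeff k n) :
    ∃ t, b t / a t = ω := by
  have hdet : (momentLeft k lam a b).det * (momentRight k a b).det = 1 := by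
    rw [← Matrix.det_mul, momentLeft_mul_momentRight h, det_pOddCatalecticant]
  have hB := right_ne_zero_of_mul_eq_one hdet
  have hne := ne_zero_of_det_momentLeft_ne_zero (left_ne_zero_of_mul_eq_one hdet)
  have ha t := (hne t).2
  have hinj : Function.Injective fun t => b t / a t := by
    rw [← Matrix.det_vandermonde_ne_zero_iff]
    rw [momentRight_eq_diagonal_mul_vandermonde ha, Matrix.det_mul] at hB
    exact right_ne_zero_of_mul hB
  have hsum t : ∑ i ∈ range (k + 1), (b t / a t) ^ i = 0 := by
    have hzero := sum_pow_mul_pow_eq_zero_of_moments h hB (fun t => (hne t).1) t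
    rw [sum_congr rfl fun i hi => ?_, ← mul_sum] at hzero
    · exact (mul_eq_zero.1 hzero).resolve_left (pow_ne_zero k (ha t))
    · rw [div_pow, ← pow_sub_mul_pow (a t) (Nat.le_of_lt_succ (mem_range.1 hi))]
      field_simp [pow_ne_zero i (ha t)]
  exact hω.mem_range_of_injective_of_geom_sum_eq_zero hk hinj hsum

theorem IsPrimitiveRoot.sum_pow_pow {R : Type*} [CommRing R] [IsDomain R] {n : ℕ} {ω : R}
    (hω : IsPrimitiveRoot ω n) (q : ℕ) :
    ∑ j ∈ range n, (ω ^ j) ^ q = if n ∣ q then (n : R) else 0 := by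
  simp_rw [← pow_mul, mul_comm _ q, pow_mul]
  split_ifs with hq
  · simp [(hω.pow_eq_one_iff_dvd q).2 hq]
  · have hne : ω ^ q - 1 ≠ 0 := sub_ne_zero.2 fun h => hq ((hω.pow_eq_one_iff_dvd q).1 h)
    have := geom_sum_mul (ω ^ q) n
    rw [pow_right_comm, hω.pow_eq_one, one_pow, sub_self] at this
    exact (mul_eq_zero.1 this).resolve_right hne

theorem pOdd_eq_sum_rootsOfUnity {k : ℕ} (hk : 1 ≤ k) {ω : ℂ} (hω : IsPrimitiveRoot ω (k + 1)) :
    pOdd k = ∑ j : Fin k, C (((ω ^ ((j : ℕ) + 1)) ^ 2 - ω ^ ((j : ℕ) + 1)) / (k + 1)) *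
      (C 1 * X 0 + C (ω ^ ((j : ℕ) + 1)) * X 1) ^ (2 * k - 1) := by
  rw [pOdd_eq_sum_iff hk]
  intro n hn
  set f : ℂ → ℂ := fun z => (z ^ 2 - z) / (k + 1) * z ^ n
  have hdvd : ∀ m, 0 < m → m < 2 * (k + 1) → ((k + 1) ∣ m ↔ m = k + 1) :=
    fun m hm hm' => ⟨fun h => Nat.eq_of_dvd_of_lt_two_mul hm.ne' h hm', fun h => h ▸ dvd_rfl⟩
  calc ∑ j : Fin k, ((ω ^ ((j : ℕ) + 1)) ^ 2 - ω ^ ((j : ℕ) + 1)) / (k + 1) * 1 ^ (2 * k - 1 - n)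
        * (ω ^ ((j : ℕ) + 1)) ^ n
      = ∑ j ∈ range (k + 1), f (ω ^ j) := by
        rw [← Fin.sum_univ_eq_sum_range, Fin.sum_univ_succ]
        simp [f]
    _ = ((∑ j ∈ range (k + 1), (ω ^ j) ^ (n + 2)) - ∑ j ∈ range (k + 1), (ω ^ j) ^ (n + 1))
          / (k + 1) := by
        rw [← sum_sub_distrib, sum_div]
        refine sum_congr rfl fun j _ => ?_
        ring
    _ = pOddCoeff k n := by
        rw [hω.sum_pow_pow, hω.sum_pow_pow]
        simp only [hdvd (n + 2) (by omega) (by omega), hdvd (n + 1) (by omega) (by omega),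
          pOddCoeff]
        push_cast
        split_ifs <;> first | omega | (field_simp; ring)

/-- For `k ≥ 3` and a subfield `K ⊆ ℂ`, the form
`p_{2k−1} = C(2k−1,k) x^{k−1} y^{k−1} (x − y)` has `K`-rank `k` iff `ζ_{k+1} ∈ K`. -/
theorem rank_p_odd_eq_iff (k : ℕ) (hk : 3 ≤ k) (K : Subfield ℂ) :
    Lrank K (2 * k - 1)
      (MvPolynomial.C (((2 * k - 1).choose k : ℕ) : ℂ) *
        X 0 ^ (k - 1) * X 1 ^ (k - 1) * (X 0 - X 1)) = (k : ℕ∞)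
    ↔ zeta (k + 1) ∈ K := by
  have hk1 : 1 ≤ k := by omega
  have hζ : IsPrimitiveRoot (zeta (k + 1)) (k + 1) := by
    simpa [zeta] using Complex.isPrimitiveRoot_exp (k + 1) (Nat.succ_ne_zero k)
  change Lrank K (2 * k - 1) (pOdd k) = k ↔ _
  rw [Lrank_eq_iff_of_forall_le fun r lam a b _ hrep => by
    simpa using le_card_of_moments ((pOdd_eq_sum_iff hk1 lam a b).1 hrep)]
  constructor
  · rintro ⟨lam, a, b, hK, hrep⟩
    obtain ⟨t, ht⟩ := exists_div_eq_of_moments hk1 hζ ((pOdd_eq_sum_iff hk1 lam a b).1 hrep)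
    exact ht ▸ div_mem (hK t).2.2 (hK t).2.1
  · intro hζK
    have hpow (j : Fin k) : zeta (k + 1) ^ ((j : ℕ) + 1) ∈ K := pow_mem hζK _
    refine ⟨_, _, _, fun j => ⟨?_, one_mem K, hpow j⟩, pOdd_eq_sum_rootsOfUnity hk1 hζ⟩
    exact div_mem (sub_mem (pow_mem (hpow j) 2) (hpow j)) (add_mem (natCast_mem K k) (one_mem K))
end

section
/- For every integer k ≥ 3, the binary form p_{2k}(x,y) = C(2k,k) x^k y^k of degree 2k satisfies L_{ℚ(ζ_{k+1})}(p_{2k}) = k + 1. -/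
open MvPolynomial

open Finset


lemma finsupp_pair_eq (a b a' b' : ℕ) :
    (Finsupp.single (0 : Fin 2) a + Finsupp.single 1 b
      = Finsupp.single 0 a' + Finsupp.single 1 b') ↔ (a = a' ∧ b = b') := by
  constructor
  · intro h
    have h0 := DFunLike.congr_fun h 0
    have h1 := DFunLike.congr_fun h 1
    simp [Finsupp.single_apply] at h0 h1
    exact ⟨h0, h1⟩
  · rintro ⟨rfl, rfl⟩; rfl

lemma mono_eq (c : ℂ) (a b : ℕ) :
    (MvPolynomial.C c * X 0 ^ a * X 1 ^ b : MvPolynomial (Fin 2) ℂ)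
      = monomial (Finsupp.single 0 a + Finsupp.single 1 b) c := by
  rw [X_pow_eq_monomial, X_pow_eq_monomial, C_apply]
  simp only [monomial_mul]
  congr 1
  · simp
  · ring

lemma coeff_linpow (α β : ℂ) (n a b : ℕ) (hab : a + b = n) :
    MvPolynomial.coeff (Finsupp.single 0 a + Finsupp.single 1 b)
      ((MvPolynomial.C α * X 0 + MvPolynomial.C β * X 1) ^ n : MvPolynomial (Fin 2) ℂ)
      = (n.choose b : ℂ) * α ^ a * β ^ b := by
  rw [add_pow, MvPolynomial.coeff_sum]
  have hterm : ∀ m : ℕ, (MvPolynomial.C α * X 0) ^ m * (MvPolynomial.C β * X 1) ^ (n - m)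
      * ((n.choose m : ℕ) : MvPolynomial (Fin 2) ℂ)
      = monomial (Finsupp.single 0 m + Finsupp.single 1 (n - m))
          (α ^ m * β ^ (n - m) * (n.choose m : ℂ)) := by
    intro m
    rw [mul_pow, mul_pow, ← C_pow, ← C_pow, X_pow_eq_monomial, X_pow_eq_monomial,
      ← C_eq_coe_nat]
    rw [C_apply, C_apply, C_apply]
    simp only [monomial_mul]
    congr 1
    · simp
    · ring
  simp_rw [hterm, coeff_monomial]
  rw [Finset.sum_eq_single a]
  · rw [if_pos]
    · rw [show n - a = b by omega, show n.choose a = n.choose b by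
        rw [show b = n - a by omega]; exact (Nat.choose_symm (by omega)).symm]
      ring
    · rw [show n - a = b by omega]
  · intro m hm hma
    rw [if_neg]
    rw [finsupp_pair_eq]
    rintro ⟨rfl, -⟩; exact hma rfl
  · intro ha; exact absurd (Finset.mem_range.2 (by omega)) ha

noncomputable def cat (k : ℕ) (f : MvPolynomial (Fin 2) ℂ) :
    Matrix (Fin (k+1)) (Fin (k+1)) ℂ :=
  Matrix.of fun i j => MvPolynomial.coeff
      (Finsupp.single 0 (2*k - ((i:ℕ)+(j:ℕ))) + Finsupp.single 1 ((i:ℕ)+(j:ℕ))) f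
    / (((2*k).choose ((i:ℕ)+(j:ℕ)) : ℕ) : ℂ)

lemma cat_sum (k r : ℕ) (g : Fin r → MvPolynomial (Fin 2) ℂ) :
    cat k (∑ j, g j) = ∑ j, cat k (g j) := by
  ext i j
  simp [cat, MvPolynomial.coeff_sum, Matrix.sum_apply, Finset.sum_div]

lemma matrix_rank_add_le {n : ℕ} (A B : Matrix (Fin n) (Fin n) ℂ) :
    (A + B).rank ≤ A.rank + B.rank := by
  unfold Matrix.rank
  rw [Matrix.mulVecLin_add]
  calc Module.finrank ℂ ↥(LinearMap.range (A.mulVecLin + B.mulVecLin))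
      ≤ Module.finrank ℂ ↥(LinearMap.range A.mulVecLin ⊔ LinearMap.range B.mulVecLin) := by
        apply Submodule.finrank_mono
        intro x hx
        obtain ⟨y, rfl⟩ := hx
        exact Submodule.add_mem_sup (LinearMap.mem_range_self _ y) (LinearMap.mem_range_self _ y)
    _ ≤ _ := Submodule.finrank_add_le_finrank_add_finrank _ _

lemma matrix_rank_sum_le {n r : ℕ} (A : Fin r → Matrix (Fin n) (Fin n) ℂ) :
    (∑ j, A j).rank ≤ ∑ j, (A j).rank := by
  classical
  induction r with
  | zero => simp
  | succ m ih =>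
      rw [Fin.sum_univ_succ, Fin.sum_univ_succ]
      exact le_trans (matrix_rank_add_le _ _) (by gcongr; exact ih _)


noncomputable def antiN (k : ℕ) : Matrix (Fin (k+1)) (Fin (k+1)) ℂ :=
  Matrix.of fun i j => if (i:ℕ) + (j:ℕ) = k then 1 else 0

lemma antiN_mul_self (k : ℕ) : antiN k * antiN k = 1 := by
  ext i j
  rw [Matrix.mul_apply, Matrix.one_apply]
  have hi : (i : ℕ) < k + 1 := i.isLt
  have hj : (j : ℕ) < k + 1 := j.isLt
  rcases eq_or_ne i j with rfl | hij
  · rw [if_pos rfl]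
    rw [Finset.sum_eq_single (⟨k - (i:ℕ), by omega⟩ : Fin (k+1))]
    · have e1 : (i:ℕ) + (k - (i:ℕ)) = k := by omega
      have e2 : (k - (i:ℕ)) + (i:ℕ) = k := by omega
      simp [antiN, Fin.val_mk, e1, e2]
    · intro l _ hl
      have : (i:ℕ) + (l:ℕ) ≠ k := by
        intro h; apply hl; apply Fin.ext; simp; omega
      simp [antiN, this]
    · intro h; exact absurd (Finset.mem_univ _) h
  · rw [if_neg hij]
    apply Finset.sum_eq_zero
    intro l _
    by_cases h1 : (i:ℕ) + (l:ℕ) = k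
    · have h2 : (l:ℕ) + (j:ℕ) ≠ k := by
        intro h2; apply hij; apply Fin.ext; omega
      simp [antiN, h1, h2]
    · simp [antiN, h1]

lemma cat_p (k : ℕ) :
    cat k (MvPolynomial.C (((2*k).choose k : ℕ) : ℂ) * X 0 ^ k * X 1 ^ k) = antiN k := by
  ext i j
  have hi : (i : ℕ) < k + 1 := i.isLt
  have hj : (j : ℕ) < k + 1 := j.isLt
  rw [mono_eq]
  simp only [cat, antiN, Matrix.of_apply, coeff_monomial]
  by_cases h : (i:ℕ) + (j:ℕ) = k
  · rw [if_pos, if_pos h]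
    · rw [h]
      have : (((2*k).choose k : ℕ) : ℂ) ≠ 0 := by
        exact_mod_cast Nat.cast_ne_zero.mpr (Nat.choose_pos (by omega)).ne'
      field_simp
    · rw [finsupp_pair_eq]; omega
  · rw [if_neg, if_neg h]
    · simp
    · rw [finsupp_pair_eq]; omega

lemma cat_term_eq (k : ℕ) (lam α β : ℂ) :
    cat k (MvPolynomial.C lam * (MvPolynomial.C α * X 0 + MvPolynomial.C β * X 1) ^ (2*k))
      = (Matrix.of fun (i : Fin (k+1)) (_ : Fin 1) => lam * α ^ (k - (i:ℕ)) * β ^ (i:ℕ))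
        * (Matrix.of fun (_ : Fin 1) (j : Fin (k+1)) => α ^ (k - (j:ℕ)) * β ^ (j:ℕ)) := by
  ext i j
  have hi : (i : ℕ) < k + 1 := i.isLt
  have hj : (j : ℕ) < k + 1 := j.isLt
  rw [Matrix.mul_apply]
  simp only [cat, Matrix.of_apply, coeff_C_mul, Finset.univ_unique, Finset.sum_singleton]
  rw [coeff_linpow α β (2*k) (2*k - ((i:ℕ)+(j:ℕ))) ((i:ℕ)+(j:ℕ)) (by omega)]
  have hc : (((2*k).choose ((i:ℕ)+(j:ℕ)) : ℕ) : ℂ) ≠ 0 := by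
    exact_mod_cast Nat.cast_ne_zero.mpr (Nat.choose_pos (by omega)).ne'
  rw [show 2*k - ((i:ℕ)+(j:ℕ)) = (k - (i:ℕ)) + (k - (j:ℕ)) by omega, pow_add, pow_add]
  field_simp

lemma rank_cat_term_le (k : ℕ) (lam α β : ℂ) :
    (cat k (MvPolynomial.C lam *
      (MvPolynomial.C α * X 0 + MvPolynomial.C β * X 1) ^ (2*k))).rank ≤ 1 := by
  rw [cat_term_eq]
  refine le_trans (Matrix.rank_mul_le_left _ _) (le_trans (Matrix.rank_le_card_width _) ?_)
  simp


lemma zeta_primitive (k : ℕ) : IsPrimitiveRoot (zeta (k+1)) (k+1) := by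
  have := Complex.isPrimitiveRoot_exp (k+1) (by omega)
  simpa [zeta] using this

lemma root_sum (k : ℕ) (z : ℂ) (hz : z ^ (k+1) = 1) :
    ∑ j ∈ Finset.range (k+1), z ^ j = if z = 1 then ((k+1 : ℕ) : ℂ) else 0 := by
  rcases eq_or_ne z 1 with rfl | h
  · simp
  · rw [if_neg h, geom_sum_eq h, hz, sub_self, zero_div]

lemma scalar_identity (k : ℕ) (a b : ℂ) :
    ∑ j ∈ Finset.range (k+1), (zeta (k+1)) ^ j / ((k+1 : ℕ) : ℂ)
        * (a + (zeta (k+1)) ^ j * b) ^ (2*k)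
      = (((2*k).choose k : ℕ) : ℂ) * a ^ k * b ^ k := by
  set ζ := zeta (k+1) with hζ
  have hprim := zeta_primitive k
  have hone : ζ ^ (k+1) = 1 := hprim.pow_eq_one
  have hk1 : ((k+1 : ℕ) : ℂ) ≠ 0 := by exact_mod_cast (Nat.succ_ne_zero k)
  have expand : ∀ j ∈ Finset.range (k+1),
      ζ ^ j / ((k+1 : ℕ) : ℂ) * (a + ζ ^ j * b) ^ (2*k)
      = ∑ m ∈ Finset.range (2*k+1),
          (ζ ^ (2*k - m + 1)) ^ j * (a ^ m * b ^ (2*k-m) * ((2*k).choose m : ℂ) / ((k+1:ℕ):ℂ)) := by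
    intro j _
    rw [add_pow, Finset.mul_sum]
    apply Finset.sum_congr rfl
    intro m hm
    have hm' : m ≤ 2*k := by simpa using Nat.lt_succ_iff.mp (Finset.mem_range.mp hm)
    rw [mul_pow, ← pow_mul, ← pow_mul]
    rw [show (2*k - m + 1) * j = j + j * (2*k-m) by ring, pow_add]
    field_simp
  rw [Finset.sum_congr rfl expand, Finset.sum_comm]
  have inner : ∀ m ∈ Finset.range (2*k+1),
      ∑ j ∈ Finset.range (k+1),
        (ζ ^ (2*k - m + 1)) ^ j * (a ^ m * b ^ (2*k-m) * ((2*k).choose m : ℂ) / ((k+1:ℕ):ℂ))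
      = if m = k then (((2*k).choose k : ℕ):ℂ) * a ^ k * b ^ k else 0 := by
    intro m hm
    have hm' : m ≤ 2*k := by simpa using Nat.lt_succ_iff.mp (Finset.mem_range.mp hm)
    rw [← Finset.sum_mul, root_sum k _ (by rw [← pow_mul, mul_comm, pow_mul, hone, one_pow])]
    have hdvd : (ζ ^ (2*k - m + 1) = 1) ↔ (k+1) ∣ (2*k - m + 1) := hprim.pow_eq_one_iff_dvd _
    by_cases h : m = k
    · rw [if_pos (hdvd.mpr ⟨1, by omega⟩), if_pos h, h, show 2*k - k = k by omega]
      have hk2 : ((k:ℂ) + 1) ≠ 0 := by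
        intro hc; apply hk1; push_cast; rw [hc]
      field_simp
    · rw [if_neg, if_neg h, zero_mul]
      rw [hdvd]
      rintro ⟨t, ht⟩
      have h1 : 1 ≤ 2*k - m + 1 := by omega
      have h2 : 2*k - m + 1 ≤ 2*k + 1 := by omega
      have ht2 : t < 2 := by nlinarith
      interval_cases t <;> omega
  rw [Finset.sum_congr rfl inner, Finset.sum_ite_eq' (Finset.range (2*k+1)) k]
  rw [if_pos (Finset.mem_range.mpr (by omega))]

lemma poly_identity (k : ℕ) :
    (MvPolynomial.C (((2*k).choose k : ℕ) : ℂ) * X 0 ^ k * X 1 ^ k : MvPolynomial (Fin 2) ℂ)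
      = ∑ j : Fin (k+1), MvPolynomial.C ((zeta (k+1)) ^ (j:ℕ) / ((k+1:ℕ):ℂ)) *
          (MvPolynomial.C 1 * X 0 + MvPolynomial.C ((zeta (k+1)) ^ (j:ℕ)) * X 1) ^ (2*k) := by
  apply MvPolynomial.funext
  intro x
  rw [map_sum]
  simp only [eval_mul, eval_pow, eval_add, eval_C, eval_X, one_mul]
  rw [Fin.sum_univ_eq_sum_range
    (fun j => (zeta (k+1)) ^ j / ((k+1:ℕ):ℂ) * (x 0 + (zeta (k+1)) ^ j * x 1) ^ (2*k))]
  exact (scalar_identity k (x 0) (x 1)).symm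

lemma lower_bound (k r : ℕ) (lam al be : Fin r → ℂ)
    (heq : (MvPolynomial.C (((2*k).choose k : ℕ):ℂ) * X 0 ^ k * X 1 ^ k : MvPolynomial (Fin 2) ℂ)
      = ∑ j, MvPolynomial.C (lam j) *
          (MvPolynomial.C (al j) * X 0 + MvPolynomial.C (be j) * X 1) ^ (2*k)) :
    k + 1 ≤ r := by
  have h1 : (cat k (MvPolynomial.C (((2*k).choose k : ℕ):ℂ) * X 0 ^ k * X 1 ^ k)).rank = k + 1 := by
    rw [cat_p, Matrix.rank_of_isUnit _ ⟨⟨antiN k, antiN k, antiN_mul_self k, antiN_mul_self k⟩, rfl⟩]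
    simp
  calc k + 1 = _ := h1.symm
    _ = (∑ j : Fin r, cat k (MvPolynomial.C (lam j) *
          (MvPolynomial.C (al j) * X 0 + MvPolynomial.C (be j) * X 1) ^ (2*k))).rank := by
        rw [heq, cat_sum]
    _ ≤ ∑ j : Fin r, (cat k (MvPolynomial.C (lam j) *
          (MvPolynomial.C (al j) * X 0 + MvPolynomial.C (be j) * X 1) ^ (2*k))).rank :=
        matrix_rank_sum_le _
    _ ≤ ∑ _j : Fin r, 1 := Finset.sum_le_sum (fun j _ => rank_cat_term_le k _ _ _)
    _ = r := by simp

/-- For `k ≥ 3`, the form `p_{2k} = C(2k,k) x^k y^k` has rank `k + 1` over `ℚ(ζ_{k+1})`. -/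
theorem rank_p_even_over_zeta_succ (k : ℕ) (hk : 3 ≤ k) :
    Lrank (Subfield.closure {zeta (k + 1)}) (2 * k)
      (MvPolynomial.C (((2 * k).choose k : ℕ) : ℂ) * X 0 ^ k * X 1 ^ k)
      = ((k + 1 : ℕ) : ℕ∞) := by
  apply le_antisymm
  · apply sInf_le
    refine ⟨k+1, rfl, fun j => (zeta (k+1)) ^ (j:ℕ) / ((k+1:ℕ):ℂ),
      fun _ => 1, fun j => (zeta (k+1)) ^ (j:ℕ), ?_, ?_⟩
    · intro j
      have hz : zeta (k+1) ∈ Subfield.closure {zeta (k+1)} :=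
        Subfield.subset_closure (Set.mem_singleton _)
      exact ⟨div_mem (pow_mem hz _) (natCast_mem _ _), one_mem _, pow_mem hz _⟩
    · exact poly_identity k
  · apply le_sInf
    rintro b ⟨r, rfl, lam, al, be, -, heq⟩
    exact_mod_cast lower_bound k r lam al be heq
end
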